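/- arXiv:dg-ga/9612013 — 2 statements merged into one kernel-verified Lean document; each statement's English description precedes it below -/
import Mathlib

section
/- A rotation of ℝ³ through an angle θ ∈ (0, 2π) about a nonzero axis vector v maps every line parallel to e₃ to a line parallel to e₃ if and only if either v is parallel to e₃, or v is perpendicular to e₃ and θ = π. -/
/-- The unit vector `e₃ = (0,0,1)` of `ℝ³`. -/
def e3 : Fin 3 → ℝ := ![0, 0, 1]

/-- Rotation of `ℝ³` through angle `θ` about the (nonzero) axis vector `v`,
given by the Rodrigues formula with unit axis `u = v/‖v‖`:
`R x = cos θ • x + sin θ • (u × x) + ((1 - cos θ) ⟪u, x⟫) • u`. -/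
noncomputable def rot3 (θ : ℝ) (v : Fin 3 → ℝ) (x : Fin 3 → ℝ) : Fin 3 → ℝ :=
  let u : Fin 3 → ℝ := (Real.sqrt (∑ i, v i * v i))⁻¹ • v
  Real.cos θ • x + Real.sin θ • (crossProduct u x)
    + ((1 - Real.cos θ) * ∑ i, u i * x i) • u

lemma rot3_linear (θ : ℝ) (v a x : Fin 3 → ℝ) (t : ℝ) :
    rot3 θ v (a + t • x) = rot3 θ v a + t • rot3 θ v x := by
  simp only [rot3, map_add, map_smul]
  have hs : ∀ u : Fin 3 → ℝ, (∑ i, u i * (a + t • x) i)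
      = (∑ i, u i * a i) + t * ∑ i, u i * x i := by
    intro u
    simp [Fin.sum_univ_three]; ring
  rw [hs]
  module

lemma rot3_zero (θ : ℝ) (v : Fin 3 → ℝ) : rot3 θ v 0 = 0 := by
  simp [rot3]

lemma rot3_e3 (θ : ℝ) (v : Fin 3 → ℝ) :
    rot3 θ v e3 =
      let u : Fin 3 → ℝ := (Real.sqrt (∑ i, v i * v i))⁻¹ • v
      ![Real.sin θ * u 1 + (1 - Real.cos θ) * u 2 * u 0,
        -(Real.sin θ * u 0) + (1 - Real.cos θ) * u 2 * u 1,
        Real.cos θ + (1 - Real.cos θ) * u 2 * u 2] := by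
  funext i
  fin_cases i <;>
    simp [rot3, e3, cross_apply, Fin.sum_univ_three, Matrix.vecHead, Matrix.vecTail,
      Function.comp, Pi.smul_apply, smul_eq_mul]

lemma line_image (θ : ℝ) (v : Fin 3 → ℝ) (ε : ℝ) (hε : ε ≠ 0)
    (hw : rot3 θ v e3 = ε • e3) (a : Fin 3 → ℝ) :
    rot3 θ v '' {p | ∃ t : ℝ, p = a + t • e3}
      = {p | ∃ t : ℝ, p = rot3 θ v a + t • e3} := by
  ext p
  simp only [Set.mem_image, Set.mem_setOf_eq]
  constructor
  · rintro ⟨q, ⟨t, rfl⟩, rfl⟩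
    exact ⟨t * ε, by rw [rot3_linear, hw, smul_smul]⟩
  · rintro ⟨t, rfl⟩
    refine ⟨a + (t / ε) • e3, ⟨t / ε, rfl⟩, ?_⟩
    rw [rot3_linear, hw, smul_smul, div_mul_cancel₀ _ hε]

/-- **A rotation through `θ ∈ (0, 2π)` about `v ≠ 0` maps every line parallel to `e₃`
onto a line parallel to `e₃` iff `v ∥ e₃`, or `v ⊥ e₃` and `θ = π`.** -/
theorem rotation_preserves_vertical_lines_iff
    (θ : ℝ) (hθ : θ ∈ Set.Ioo 0 (2 * Real.pi)) (v : Fin 3 → ℝ) (hv : v ≠ 0) :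
    (∀ a : Fin 3 → ℝ, ∃ b : Fin 3 → ℝ,
        rot3 θ v '' {p | ∃ t : ℝ, p = a + t • e3} = {p | ∃ t : ℝ, p = b + t • e3})
      ↔ ((∃ c : ℝ, v = c • e3) ∨ ((∑ i, v i * e3 i) = 0 ∧ θ = Real.pi)) := by
  set N : ℝ := Real.sqrt (∑ i, v i * v i) with hNdef
  have hNpos : 0 < N := by
    apply Real.sqrt_pos.mpr
    obtain ⟨j, hj⟩ := Function.ne_iff.mp hv
    exact Finset.sum_pos' (fun i _ => mul_self_nonneg (v i))
      ⟨j, Finset.mem_univ j, mul_self_pos.mpr hj⟩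
  have hNne : N⁻¹ ≠ 0 := inv_ne_zero hNpos.ne'
  constructor
  · intro h
    obtain ⟨b, hb⟩ := h 0
    -- 0 is in the image line
    have h0 : (0 : Fin 3 → ℝ) ∈ {p | ∃ t : ℝ, p = b + t • e3} := by
      rw [← hb]
      exact ⟨0, ⟨0, by simp⟩, rot3_zero θ v⟩
    obtain ⟨t₀, ht₀⟩ := h0
    have hw : rot3 θ v e3 ∈ {p | ∃ t : ℝ, p = b + t • e3} := by
      rw [← hb]
      exact ⟨e3, ⟨1, by simp⟩, rfl⟩
    obtain ⟨t₁, ht₁⟩ := hw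
    have hbval : b = -(t₀ • e3) := by
      have := ht₀.symm
      linear_combination (norm := module) this
    have hwe : rot3 θ v e3 = (t₁ - t₀) • e3 := by
      rw [ht₁, hbval]; module
    have e0 : Real.sin θ * (N⁻¹ * v 1) + (1 - Real.cos θ) * (N⁻¹ * v 2) * (N⁻¹ * v 0) = 0 := by
      have := congrFun hwe 0
      rw [rot3_e3] at this
      simpa [e3, Pi.smul_apply, smul_eq_mul] using this
    have e1 : -(Real.sin θ * (N⁻¹ * v 0)) + (1 - Real.cos θ) * (N⁻¹ * v 2) * (N⁻¹ * v 1) = 0 := by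
      have := congrFun hwe 1
      rw [rot3_e3] at this
      simpa [e3, Pi.smul_apply, smul_eq_mul] using this
    set s : ℝ := Real.sin θ with hs
    set k : ℝ := (1 - Real.cos θ) * (N⁻¹ * v 2) with hk
    have hu0 : (k ^ 2 + s ^ 2) * (N⁻¹ * v 0) = 0 := by linear_combination k * e0 - s * e1
    have hu1 : (k ^ 2 + s ^ 2) * (N⁻¹ * v 1) = 0 := by linear_combination s * e0 + k * e1
    by_cases hks : k ^ 2 + s ^ 2 = 0
    · -- sin θ = 0 and (1-cos θ) * u₂ = 0
      have hs0 : s = 0 := by nlinarith [sq_nonneg k, sq_nonneg s]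
      have hk0 : k = 0 := by nlinarith [sq_nonneg k, sq_nonneg s]
      have hθπ : θ = Real.pi := by
        obtain ⟨n, hn⟩ := Real.sin_eq_zero_iff.mp hs0
        have hπ := Real.pi_pos
        have h1 : (0:ℝ) < (n:ℝ) * Real.pi := hn ▸ hθ.1
        have h2 : (n:ℝ) * Real.pi < 2 * Real.pi := hn ▸ hθ.2
        have hn0 : (0:ℝ) < (n:ℝ) := by nlinarith
        have hn2 : (n:ℝ) < 2 := by nlinarith
        have hn1 : n = 1 := by
          have ha : (0:ℤ) < n := by exact_mod_cast hn0
          have hb : n < 2 := by exact_mod_cast hn2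
          omega
        rw [← hn, hn1]; push_cast; ring
      have hv2 : v 2 = 0 := by
        rw [hk, hθπ, Real.cos_pi] at hk0
        have : N⁻¹ * v 2 = 0 := by linarith [hk0]
        rcases mul_eq_zero.mp this with h | h
        · exact absurd h hNne
        · exact h
      right
      refine ⟨?_, hθπ⟩
      simp [e3, Fin.sum_univ_three, hv2]
    · have hv0 : v 0 = 0 := by
        rcases mul_eq_zero.mp hu0 with h | h
        · exact absurd h hks
        · rcases mul_eq_zero.mp h with h' | h'
          · exact absurd h' hNne
          · exact h'
      have hv1 : v 1 = 0 := by
        rcases mul_eq_zero.mp hu1 with h | h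
        · exact absurd h hks
        · rcases mul_eq_zero.mp h with h' | h'
          · exact absurd h' hNne
          · exact h'
      left
      refine ⟨v 2, funext fun i => ?_⟩
      fin_cases i <;> simp [e3, hv0, hv1]
  · rintro (⟨c₀, rfl⟩ | ⟨hperp, rfl⟩)
    · -- axis parallel to e₃
      have hc : c₀ ≠ 0 := by
        rintro rfl
        simp at hv
      have hNeq : N = |c₀| := by
        rw [hNdef]
        have : (∑ i, (c₀ • e3) i * (c₀ • e3) i) = c₀ ^ 2 := by
          simp [e3, Fin.sum_univ_three]; ring
        rw [this, Real.sqrt_sq_eq_abs]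
      have hsq : (N⁻¹ * c₀) * (N⁻¹ * c₀) = 1 := by
        have h1 : c₀ * c₀ ≠ 0 := mul_ne_zero hc hc
        rw [hNeq, show |c₀|⁻¹ * c₀ * (|c₀|⁻¹ * c₀) = (c₀ * c₀) / (|c₀| * |c₀|) by ring,
          abs_mul_abs_self, div_self h1]
      have hw : rot3 θ (c₀ • e3) e3 = (1 : ℝ) • e3 := by
        rw [rot3_e3, ← hNdef]
        funext i
        fin_cases i <;>
          simp [e3, Pi.smul_apply, smul_eq_mul]
        linear_combination (1 - Real.cos θ) * hsq
      intro a
      exact ⟨rot3 θ (c₀ • e3) a, line_image θ (c₀ • e3) 1 one_ne_zero hw a⟩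
    · -- axis perpendicular to e₃, θ = π
      have hv2 : v 2 = 0 := by
        simpa [e3, Fin.sum_univ_three] using hperp
      have hw : rot3 Real.pi v e3 = (-1 : ℝ) • e3 := by
        rw [rot3_e3]
        funext i
        fin_cases i <;>
          simp [e3, Pi.smul_apply, smul_eq_mul, hv2, Real.sin_pi, Real.cos_pi]
      intro a
      exact ⟨rot3 Real.pi v a, line_image Real.pi v (-1) (by norm_num) hw a⟩
end

section
/- The subgroup of (ℝ², +) generated by two linearly independent vectors w₁, w₂ and a third vector w₃ is discrete if and only if w₃ is a ℚ-linear combination of w₁ and w₂. -/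
/-!
If the coordinates of `w₃` in the basis `w₁, w₂` are rationals with denominators dividing `N`,
multiplication by `N` embeds the group into the lattice `ℤ w₁ + ℤ w₂`, which is discrete.
Conversely, if a coordinate `c` of `w₃` is irrational, reducing the multiples `n • w₃` modulo
`ℤ w₁ + ℤ w₂` into the fundamental parallelogram gives infinitely many group elements (their
coordinates `fract (n * c)` are pairwise distinct) in a bounded set, so the group is not discrete.
-/

open Module Submodule

theorem Irrational.injective_fract_natCast_mul {x : ℝ} (hx : Irrational x) :
    Function.Injective fun n : ℕ => Int.fract (n * x) := by
  intro m n hmn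
  obtain ⟨z, hz⟩ := Int.fract_eq_fract.1 hmn
  by_contra hne
  have hsub : ((m : ℤ) - n : ℤ) ≠ 0 := sub_ne_zero.2 (by exact_mod_cast hne)
  refine (hx.intCast_mul hsub).ne_int z ?_
  push_cast
  linarith

section Basis

variable {E ι : Type*} [NormedAddCommGroup E] [NormedSpace ℝ E] [Fintype ι]

theorem Module.Basis.not_irrational_repr_of_discreteTopology (B : Basis ι ℝ E)
    {G : AddSubgroup E} [DiscreteTopology G] (hB : ∀ i, B i ∈ G) {v : E} (hv : v ∈ G) (i : ι) :
    ¬Irrational (B.repr v i) := by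
  intro hirr
  have : FiniteDimensional ℝ E := .of_basis B
  have hspan : span ℤ (Set.range B) ≤ G.toIntSubmodule :=
    span_le.2 (Set.range_subset_iff.2 hB)
  have hmem : ∀ n : ℕ, ZSpan.fract B (n • v) ∈ G := fun n =>
    G.sub_mem (G.nsmul_mem hv n) (hspan (ZSpan.floor B _).2)
  have hinj : Function.Injective fun n : ℕ => ZSpan.fract B (n • v) := fun m n hmn =>
    hirr.injective_fract_natCast_mul <| by
      simpa [Nat.cast_smul_eq_nsmul] using congrArg (fun x => B.repr x i) hmn
  have hfin : (ZSpan.fundamentalDomain B ∩ G).Finite :=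
    Metric.finite_isBounded_inter_isClosed DiscreteTopology.isDiscrete
      (ZSpan.fundamentalDomain_isBounded B) AddSubgroup.isClosed_of_discrete
  exact Set.infinite_of_injective_forall_mem hinj
    (fun n => Set.mem_inter (ZSpan.fract_mem_fundamentalDomain B _) (hmem n)) hfin

theorem Module.Basis.discreteTopology_closure_of_nsmul_mem_span (B : Basis ι ℝ E) {N : ℕ}
    (hN : N ≠ 0) {S : Set E} (hS : ∀ x ∈ S, N • x ∈ span ℤ (Set.range B)) :
    DiscreteTopology (AddSubgroup.closure S) := by
  have hG : ∀ x ∈ AddSubgroup.closure S, N • x ∈ span ℤ (Set.range B) := by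
    intro x hx
    induction hx using AddSubgroup.closure_induction with
    | mem x hx => exact hS x hx
    | zero => simp
    | add x y _ _ hx hy => simpa [smul_add] using add_mem hx hy
    | neg x _ hx => simpa [smul_neg] using neg_mem hx
  exact .of_continuous_injective
    (f := fun x : AddSubgroup.closure S => (⟨N • x, hG x x.2⟩ : span ℤ (Set.range B)))
    ((continuous_subtype_val.const_smul N).subtype_mk _) fun x y hxy => Subtype.ext <| by
      simpa [← Nat.cast_smul_eq_nsmul ℝ, hN] using congrArg Subtype.val hxy

end Basis

theorem Rat.den_nsmul_cast_smul {K V : Type*} [DivisionRing K] [CharZero K] [AddCommGroup V]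
    [Module K V] (q : ℚ) (v : V) : q.den • ((q : K) • v) = q.num • v := by
  rw [← Nat.cast_smul_eq_nsmul K, ← Int.cast_smul_eq_zsmul K, smul_smul,
    ← Rat.cast_natCast, ← Rat.cast_mul, q.den_mul_eq_num, Rat.cast_intCast]

/-- **The subgroup of `(ℝ²,+)` generated by two linearly independent vectors `w₁, w₂`
and a third vector `w₃` is discrete iff `w₃` is a `ℚ`-linear combination of `w₁, w₂`.** -/
theorem subgroup_discrete_iff_rat_combination
    (w₁ w₂ w₃ : ℝ × ℝ) (h : LinearIndependent ℝ ![w₁, w₂]) :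
    DiscreteTopology ↥(AddSubgroup.closure ({w₁, w₂, w₃} : Set (ℝ × ℝ)))
      ↔ ∃ a b : ℚ, w₃ = (a : ℝ) • w₁ + (b : ℝ) • w₂ := by
  let B := basisOfLinearIndependentOfCardEqFinrank h (by simp)
  have hB : ⇑B = ![w₁, w₂] := coe_basisOfLinearIndependentOfCardEqFinrank h _
  constructor
  · intro hG
    have hmem : ∀ x ∈ ({w₁, w₂, w₃} : Set (ℝ × ℝ)), x ∈ AddSubgroup.closure {w₁, w₂, w₃} :=
      fun x hx => AddSubgroup.subset_closure hx
    have hBG : ∀ i, B i ∈ AddSubgroup.closure {w₁, w₂, w₃} := by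
      simpa [hB, Fin.forall_fin_two] using ⟨hmem w₁ (by simp), hmem w₂ (by simp)⟩
    have hw₃ := hmem w₃ (by simp)
    obtain ⟨a, ha⟩ := not_not.1 (B.not_irrational_repr_of_discreteTopology hBG hw₃ 0)
    obtain ⟨b, hb⟩ := not_not.1 (B.not_irrational_repr_of_discreteTopology hBG hw₃ 1)
    refine ⟨a, b, ?_⟩
    conv_lhs => rw [← B.sum_repr w₃]
    simp [Fin.sum_univ_two, hB, ha, hb]
  · rintro ⟨a, b, rfl⟩
    have hw₁ : w₁ ∈ span ℤ (Set.range B) := subset_span ⟨0, by simp [hB]⟩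
    have hw₂ : w₂ ∈ span ℤ (Set.range B) := subset_span ⟨1, by simp [hB]⟩
    refine B.discreteTopology_closure_of_nsmul_mem_span (N := a.den * b.den) (by positivity) ?_
    simp only [Set.mem_insert_iff, Set.mem_singleton_iff, forall_eq_or_imp, forall_eq]
    refine ⟨nsmul_mem hw₁ _, nsmul_mem hw₂ _, ?_⟩
    rw [smul_add, mul_nsmul, mul_nsmul', Rat.den_nsmul_cast_smul, Rat.den_nsmul_cast_smul]
    exact add_mem (nsmul_mem (zsmul_mem hw₁ _) _) (nsmul_mem (zsmul_mem hw₂ _) _)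
end
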